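/- Let f : [0,1]^d → ℝ be continuous. Then φ₁, the function on top of the convex hull H_f of the graph of f, is continuous on [0,1]^d. -/

import Mathlib

open Set Metric Filter

noncomputable section

def Cube (d : ℕ) : Set (Fin d → ℝ) := Set.Icc 0 1

def graphHull (d : ℕ) (f : (Fin d → ℝ) → ℝ) : Set ((Fin d → ℝ) × ℝ) :=
  convexHull ℝ {p : (Fin d → ℝ) × ℝ | p.1 ∈ Cube d ∧ p.2 = f p.1}

def phi1 (d : ℕ) (f : (Fin d → ℝ) → ℝ) (x : Fin d → ℝ) : ℝ :=
  sSup {y : ℝ | (x, y) ∈ graphHull d f}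

/-!
The convex hull `H` of the graph is compact (Carathéodory), so the supremum defining `φ₁ x` is
attained and `φ₁` is upper semicontinuous. For lower semicontinuity at `x₀`, write a nearby point
`x` of the cube as the image of `x₀` under a homothety `T` of ratio `1 - s`, `s` small, centred in
the cube. `T` maps the cube into itself and moves points by at most `s · diam`, so applying `T` to
the points of a convex combination representing `(x₀, φ₁ x₀)` and using uniform continuity of `f`
gives `φ₁ x ≥ φ₁ x₀ - ε`.
-/

open Topology AffineMap

lemma Function.extend_mem {α β γ : Type*} {f : α → β} {g : α → γ} {e' : β → γ} {t : Set γ}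
    (hg : ∀ a, g a ∈ t) (he' : ∀ b, e' b ∈ t) (b : β) : extend f g e' b ∈ t := by
  classical
  rw [extend_def]
  split_ifs <;> simp [hg, he']

theorem IsCompact.convexHull {E : Type*} [NormedAddCommGroup E] [NormedSpace ℝ E]
    [FiniteDimensional ℝ E] {s : Set E} (hs : IsCompact s) : IsCompact (convexHull ℝ s) := by
  rcases s.eq_empty_or_nonempty with rfl | ⟨p₀, hp₀⟩
  · simp
  let n := Module.finrank ℝ E + 1
  let Φ : (Fin n → ℝ) × (Fin n → E) → E := fun p => ∑ i, p.1 i • p.2 i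
  suffices _root_.convexHull ℝ s = Φ '' (stdSimplex ℝ (Fin n) ×ˢ univ.pi fun _ => s) by
    rw [this]
    refine ((isCompact_stdSimplex ℝ _).prod (isCompact_univ_pi fun _ => hs)).image ?_
    fun_prop
  refine Subset.antisymm (fun x hx => ?_) ?_
  · obtain ⟨ι, _, z, w, hzs, hz, hw₀, hw₁, rfl⟩ := eq_pos_convex_span_of_mem_convexHull hx
    have hcard : Fintype.card ι ≤ n :=
      hz.card_le_finrank_succ.trans (Nat.succ_le_succ (Submodule.finrank_le _))
    let e : ι ↪ Fin n := (Fintype.equivFin ι).toEmbedding.trans (Fin.castLEEmb hcard)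
    refine ⟨(Function.extend e w 0, Function.extend e z fun _ => p₀),
      ⟨⟨fun i => ?_, ?_⟩, fun i _ => ?_⟩, ?_⟩
    · exact Function.extend_mem (g := w) (t := Ici 0) (fun a => (hw₀ a).le)
        (fun _ => mem_Ici.2 le_rfl) i
    · rw [← hw₁]
      refine (Fintype.sum_of_injective e e.injective _ _ (fun i hi => ?_) fun a => ?_).symm
      · exact Function.extend_apply' _ _ _ hi
      · exact (e.injective.extend_apply _ _ a).symm
    · exact Function.extend_mem (fun a => hzs (mem_range_self a)) (fun _ => hp₀) i
    · refine (Fintype.sum_of_injective e e.injective _ _ (fun i hi => ?_) fun a => ?_).symm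
      · simp [Function.extend_apply' _ _ _ hi]
      · simp [e.injective.extend_apply]
  · rintro _ ⟨⟨w, z⟩, ⟨hw, hz⟩, rfl⟩
    exact mem_convexHull_of_exists_fintype w z hw.1 hw.2 (fun i => hz i (mem_univ i)) rfl

def fiberSup {X : Type*} (K : Set (X × ℝ)) (x : X) : ℝ := sSup {y | (x, y) ∈ K}

section fiberSup

variable {X : Type*} [TopologicalSpace X] {K : Set (X × ℝ)} {x : X}

theorem IsCompact.bddAbove_fiber (hK : IsCompact K) (x : X) : BddAbove {y | (x, y) ∈ K} :=
  (hK.image continuous_snd).bddAbove.mono fun _ hy => mem_image_of_mem Prod.snd hy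

theorem IsCompact.le_fiberSup (hK : IsCompact K) {y : ℝ} (h : (x, y) ∈ K) : y ≤ fiberSup K x :=
  le_csSup (hK.bddAbove_fiber x) h

variable [T2Space X]

theorem IsCompact.mk_fiberSup_mem (hK : IsCompact K) (hx : x ∈ Prod.fst '' K) :
    (x, fiberSup K x) ∈ K := by
  obtain ⟨p, hp, rfl⟩ := hx
  have hclosed : IsClosed {y | (p.1, y) ∈ K} := hK.isClosed.preimage (Continuous.prodMk_right _)
  exact hclosed.csSup_mem ⟨p.2, hp⟩ (hK.bddAbove_fiber _)

theorem IsCompact.upperSemicontinuousOn_fiberSup (hK : IsCompact K) :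
    UpperSemicontinuousOn (fiberSup K) (Prod.fst '' K) := by
  intro x₀ _ y hy
  have hK' : IsCompact (K ∩ {p | y ≤ p.2}) :=
    hK.inter_right (isClosed_le continuous_const continuous_snd)
  have hx₀ : x₀ ∉ Prod.fst '' (K ∩ {p | y ≤ p.2}) := by
    rintro ⟨⟨_, t⟩, ⟨ht, hyt⟩, rfl⟩
    exact hy.not_ge (hyt.trans (hK.le_fiberSup ht))
  filter_upwards [self_mem_nhdsWithin, mem_nhdsWithin_of_mem_nhds
    ((hK'.image continuous_fst).isClosed.isOpen_compl.mem_nhds hx₀)] with x hx hxy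
  by_contra! h
  exact hxy ⟨_, ⟨hK.mk_fiberSup_mem hx, h⟩, rfl⟩

end fiberSup

section affine

variable {E : Type*} [AddCommGroup E] [Module ℝ E] {C : Set E} {f : E → ℝ}

theorem Convex.mapsTo_homothety (hC : Convex ℝ C) {c : E} (hc : c ∈ C) {r : ℝ}
    (hr : r ∈ Icc 0 1) : MapsTo (homothety c r) C C := fun y hy => by
  rw [homothety_eq_lineMap]
  exact hC.lineMap_mem hc hy hr

theorem subset_fst_image_convexHull_graphOn : C ⊆ Prod.fst '' convexHull ℝ (C.graphOn f) :=
  fun x hx => ⟨(x, f x), subset_convexHull ℝ _ (mem_graphOn.2 ⟨hx, rfl⟩), rfl⟩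

theorem exists_le_mem_convexHull_graphOn_of_mapsTo (T : E →ᵃ[ℝ] E) (hT : MapsTo T C C) {ε : ℝ}
    (hf : ∀ y ∈ C, f y - ε ≤ f (T y)) {p : E × ℝ} (hp : p ∈ convexHull ℝ (C.graphOn f)) :
    ∃ v, p.2 - ε ≤ v ∧ (T p.1, v) ∈ convexHull ℝ (C.graphOn f) := by
  suffices convexHull ℝ (C.graphOn f) ⊆
      {p | ∃ v, p.2 - ε ≤ v ∧ (T p.1, v) ∈ convexHull ℝ (C.graphOn f)} from this hp
  refine convexHull_min (fun p hp => ⟨f (T p.1), ?_, subset_convexHull ℝ _ ?_⟩) ?_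
  · rw [mem_graphOn] at hp
    linarith [hf _ hp.1, hp.2]
  · exact mem_graphOn.2 ⟨hT (mem_graphOn.1 hp).1, rfl⟩
  · rintro p ⟨v, hv, hpv⟩ q ⟨w, hw, hqw⟩ a b ha hb hab
    refine ⟨a * v + b * w, ?_, ?_⟩
    · simp only [Prod.snd_add, Prod.smul_snd, smul_eq_mul]
      linear_combination a * hv + b * hw + ε * hab
    · have : (T (a • p + b • q).1, a * v + b * w) = a • (T p.1, v) + b • (T q.1, w) := by
        simp [Convex.combo_affine_apply hab]
      rw [this]
      exact convex_convexHull ℝ _ hpv hqw ha hb hab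

end affine

section normed

variable {E : Type*} [NormedAddCommGroup E] [NormedSpace ℝ E] {C : Set E} {f : E → ℝ}

theorem fiberSup_sub_le_fiberSup_map (hH : IsCompact (convexHull ℝ (C.graphOn f)))
    (T : E →ᵃ[ℝ] E) (hT : MapsTo T C C) {ε : ℝ} (hf : ∀ y ∈ C, f y - ε ≤ f (T y)) {x : E}
    (hx : x ∈ C) :
    fiberSup (convexHull ℝ (C.graphOn f)) x - ε ≤ fiberSup (convexHull ℝ (C.graphOn f)) (T x) := by
  obtain ⟨v, hv, hmem⟩ := exists_le_mem_convexHull_graphOn_of_mapsTo T hT hf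
    (hH.mk_fiberSup_mem (subset_fst_image_convexHull_graphOn hx))
  exact hv.trans (hH.le_fiberSup hmem)

/-- `hC` says that near each of its points `C` coincides with its tangent cone, as a polytope does. -/
theorem lowerSemicontinuousOn_fiberSup_convexHull_graphOn (hCb : Bornology.IsBounded C)
    (hCv : Convex ℝ C) (hC : ∀ x₀ ∈ C, ∀ t : ℝ, 0 ≤ t → ∀ᶠ x in 𝓝[C] x₀, lineMap x₀ x t ∈ C)
    (hf : UniformContinuousOn f C) (hH : IsCompact (convexHull ℝ (C.graphOn f))) :
    LowerSemicontinuousOn (fiberSup (convexHull ℝ (C.graphOn f))) C := by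
  intro x₀ hx₀ y hy
  set ε := (fiberSup (convexHull ℝ (C.graphOn f)) x₀ - y) / 2 with hε
  obtain ⟨η, hη, hfη⟩ := Metric.uniformContinuousOn_iff.1 hf ε (by simp [ε, hy])
  obtain ⟨s', hs'₀, hs'η⟩ := exists_pos_mul_lt hη (diam C)
  set s := min s' 1
  have hs₀ : 0 < s := lt_min hs'₀ one_pos
  have hsη : s * diam C < η := by
    rw [mul_comm]
    exact (mul_le_mul_of_nonneg_left (min_le_left _ _) diam_nonneg).trans_lt hs'η
  filter_upwards [hC x₀ hx₀ s⁻¹ (inv_nonneg.2 hs₀.le)] with x hc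
  set c := lineMap x₀ x s⁻¹
  set T := homothety c (1 - s)
  have hTx : T x₀ = x := by
    simp only [T, c, homothety_apply, lineMap_apply_module', vsub_eq_sub, vadd_eq_add]
    match_scalars <;> field_simp <;> ring
  have hT : MapsTo T C C := hCv.mapsTo_homothety hc ⟨by simp [s], by linarith⟩
  have hfT : ∀ z ∈ C, f z - ε ≤ f (T z) := by
    intro z hz
    have hdist : dist (T z) z < η := calc
      dist (T z) z = s * dist c z := by simp [T, abs_of_pos hs₀]
      _ ≤ s * diam C := mul_le_mul_of_nonneg_left (dist_le_diam_of_mem hCb hc hz) hs₀.le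
      _ < η := hsη
    linarith [abs_lt.1 (Real.dist_eq _ _ ▸ hfη _ (hT hz) z hz hdist)]
  have := fiberSup_sub_le_fiberSup_map hH T hT hfT hx₀
  rw [hTx] at this
  linarith

end normed

theorem Real.eventually_lineMap_mem_Icc {a b x₀ : ℝ} (hx₀ : x₀ ∈ Icc a b) {t : ℝ} (ht : 0 ≤ t) :
    ∀ᶠ x in 𝓝[Icc a b] x₀, lineMap x₀ x t ∈ Icc a b := by
  have hcont : Continuous fun x : ℝ => lineMap x₀ x t := by fun_prop
  have hlower : ∀ᶠ x in 𝓝[Icc a b] x₀, a ≤ lineMap x₀ x t := by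
    rcases hx₀.1.eq_or_lt with rfl | h
    · filter_upwards [self_mem_nhdsWithin] with x hx
      rw [lineMap_apply_ring']
      nlinarith [hx.1]
    · refine mem_nhdsWithin_of_mem_nhds ?_
      filter_upwards [continuousAt_const.eventually_lt hcont.continuousAt (by simpa using h)]
        with x hx using hx.le
  have hupper : ∀ᶠ x in 𝓝[Icc a b] x₀, lineMap x₀ x t ≤ b := by
    rcases hx₀.2.eq_or_lt with rfl | h
    · filter_upwards [self_mem_nhdsWithin] with x hx
      rw [lineMap_apply_ring']
      nlinarith [hx.2]
    · refine mem_nhdsWithin_of_mem_nhds ?_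
      filter_upwards [hcont.continuousAt.eventually_lt continuousAt_const (by simpa using h)]
        with x hx using hx.le
  exact hlower.and hupper

theorem eventually_lineMap_mem_Icc {ι : Type*} [Finite ι] {a b x₀ : ι → ℝ} (hx₀ : x₀ ∈ Icc a b)
    {t : ℝ} (ht : 0 ≤ t) : ∀ᶠ x in 𝓝[Icc a b] x₀, lineMap x₀ x t ∈ Icc a b := by
  have hcoord (i : ι) :
      Tendsto (fun x : ι → ℝ => x i) (𝓝[Icc a b] x₀) (𝓝[Icc (a i) (b i)] (x₀ i)) :=
    (continuous_apply i).continuousWithinAt.tendsto_nhdsWithin fun x hx => ⟨hx.1 i, hx.2 i⟩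
  filter_upwards [eventually_all.2 fun i =>
    hcoord i |>.eventually (Real.eventually_lineMap_mem_Icc ⟨hx₀.1 i, hx₀.2 i⟩ ht)] with x hx
  exact ⟨fun i => (hx i).1, fun i => (hx i).2⟩

theorem continuousOn_fiberSup_convexHull_graphOn {E : Type*} [NormedAddCommGroup E]
    [NormedSpace ℝ E] [FiniteDimensional ℝ E] {C : Set E} {f : E → ℝ} (hCc : IsCompact C)
    (hCv : Convex ℝ C) (hC : ∀ x₀ ∈ C, ∀ t : ℝ, 0 ≤ t → ∀ᶠ x in 𝓝[C] x₀, lineMap x₀ x t ∈ C)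
    (hf : ContinuousOn f C) : ContinuousOn (fiberSup (convexHull ℝ (C.graphOn f))) C := by
  have hH : IsCompact (convexHull ℝ (C.graphOn f)) :=
    (hCc.image_of_continuousOn (continuousOn_id.prodMk hf)).convexHull
  rw [continuousOn_iff_lower_upperSemicontinuousOn]
  exact ⟨lowerSemicontinuousOn_fiberSup_convexHull_graphOn hCc.isBounded hCv hC
    (hCc.uniformContinuousOn_of_continuous hf) hH,
    hH.upperSemicontinuousOn_fiberSup.mono subset_fst_image_convexHull_graphOn⟩

/-- The top of the convex hull of the graph of a continuous function on the cube is
continuous on the cube. -/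
theorem phi1_continuousOn (d : ℕ) (f : (Fin d → ℝ) → ℝ)
    (hf : ContinuousOn f (Cube d)) :
    ContinuousOn (phi1 d f) (Cube d) := by
  have hgraph : {p : (Fin d → ℝ) × ℝ | p.1 ∈ Cube d ∧ p.2 = f p.1} = (Cube d).graphOn f := by
    ext p
    simp [eq_comm]
  have hphi : phi1 d f = fiberSup (convexHull ℝ ((Cube d).graphOn f)) := by
    rw [← hgraph]
    rfl
  rw [hphi]
  exact continuousOn_fiberSup_convexHull_graphOn isCompact_Icc (convex_Icc 0 1)
    (fun _ hx₀ _ ht => eventually_lineMap_mem_Icc hx₀ ht) hf
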